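/- Let H be a complex Hilbert space, c a complex number with |c| = 1, and U a unitary operator on H. Define the operator B on H ⊕ H by B(ξ, η) = (ξ + (1/2)(U - 1)(ξ + c·η), η + (1/2)(U - 1)(c̄·ξ + η)). Then for every λ ≠ 1, λ is an eigenvalue of B if and only if λ is an eigenvalue of U; more precisely, if B(ξ,η) = λ(ξ,η) with (ξ,η) ≠ 0 and λ ≠ 1, then η = c̄·ξ, ξ ≠ 0, and Uξ = λξ; conversely if Uξ = λξ with ξ ≠ 0 then B(ξ, c̄·ξ) = λ(ξ, c̄·ξ). -/

import Mathlib

/-!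
Write `T = U - 1`. The `T`-part of the second component of `B(ξ, η)` is `c̄` times that of the
first, because `c̄ (ξ + c η) = c̄ ξ + η` when `c c̄ = 1`. Hence `B(ξ, η) = μ (ξ, η)` forces
`(μ - 1)(η - c̄ ξ) = 0`, so `η = c̄ ξ` for `μ ≠ 1`; then `ξ + c η = 2 ξ` and the first component
reads `T ξ = (μ - 1) ξ`.
-/

namespace BlockOp

variable {K M : Type*} [Field K] [AddCommGroup M] [Module K M]

/-- The operator `1 + ½ (U - 1) ⊗ [[1, c], [c', 1]]` on `M × M`; the theorem takes `c' = c̄`. -/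
def blockOp (U : M →ₗ[K] M) (c c' : K) (p : M × M) : M × M :=
  (p.1 + (1 / 2 : K) • ((U p.1 - p.1) + c • (U p.2 - p.2)),
   p.2 + (1 / 2 : K) • (c' • (U p.1 - p.1) + (U p.2 - p.2)))

variable {U : M →ₗ[K] M} {c c' μ : K} {ξ η : M}

theorem snd_eq_smul_fst_of_blockOp_eq (hcc : c * c' = 1) (hμ : μ ≠ 1)
    (h : blockOp U c c' (ξ, η) = (μ • ξ, μ • η)) : η = c' • ξ := by
  obtain ⟨h₁, h₂⟩ := Prod.ext_iff.mp h
  simp only [blockOp] at h₁ h₂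
  have : (μ - 1) • (η - c' • ξ) = 0 := by
    linear_combination (norm := module) c' • h₁ - h₂ - hcc • ((1 / 2 : K) • (U η - η))
  exact sub_eq_zero.mp ((smul_eq_zero.mp this).resolve_left (sub_ne_zero.mpr hμ))

theorem apply_eq_smul_of_blockOp_eq [CharZero K] (hcc : c * c' = 1) (hμ : μ ≠ 1)
    (h : blockOp U c c' (ξ, η) = (μ • ξ, μ • η)) : U ξ = μ • ξ := by
  have h₁ := congrArg Prod.fst h
  simp only [blockOp, snd_eq_smul_fst_of_blockOp_eq hcc hμ h, map_smul] at h₁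
  have : U ξ - μ • ξ = 0 := by
    linear_combination (norm := module) h₁ - hcc • ((1 / 2 : K) • (U ξ - ξ))
  exact sub_eq_zero.mp this

theorem blockOp_eq_of_apply_eq_smul [CharZero K] (hcc : c * c' = 1) (h : U ξ = μ • ξ) :
    blockOp U c c' (ξ, c' • ξ) = (μ • ξ, μ • c' • ξ) := by
  simp only [blockOp, map_smul, h, Prod.mk.injEq]
  constructor
  · linear_combination (norm := module) hcc • ((1 / 2 : K) • ((μ - 1) • ξ))
  · module

end BlockOp

open BlockOp in
theorem stmt_0_general {H : Type*} [NormedAddCommGroup H] [InnerProductSpace ℂ H]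
    (U : H →L[ℂ] H) (c : ℂ) (hc : ‖c‖ = 1)
    (μ : ℂ) (hμ : μ ≠ 1)
    (B : H × H → H × H)
    (hB : ∀ ξ η : H, B (ξ, η) =
      (ξ + (1 / 2 : ℂ) • ((U ξ - ξ) + c • (U η - η)),
       η + (1 / 2 : ℂ) • ((starRingEnd ℂ) c • (U ξ - ξ) + (U η - η)))) :
    (∀ ξ η : H, (ξ, η) ≠ (0, 0) → B (ξ, η) = (μ • ξ, μ • η) →
      η = (starRingEnd ℂ) c • ξ ∧ ξ ≠ 0 ∧ U ξ = μ • ξ) ∧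
    (∀ ξ : H, ξ ≠ 0 → U ξ = μ • ξ →
      B (ξ, (starRingEnd ℂ) c • ξ) = (μ • ξ, μ • ((starRingEnd ℂ) c • ξ))) := by
  have hcc : c * (starRingEnd ℂ) c = 1 := by simp [Complex.mul_conj', hc]
  have hB' : B = blockOp (U : H →ₗ[ℂ] H) c ((starRingEnd ℂ) c) := funext fun p => hB p.1 p.2
  subst hB'
  refine ⟨fun ξ η hne h => ?_, fun ξ _ h => blockOp_eq_of_apply_eq_smul hcc h⟩
  have hη := snd_eq_smul_fst_of_blockOp_eq hcc hμ h
  refine ⟨hη, fun hξ => hne ?_, apply_eq_smul_of_blockOp_eq hcc hμ h⟩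
  simp [hξ, hη]

theorem stmt_0 {H : Type*} [NormedAddCommGroup H] [InnerProductSpace ℂ H] [CompleteSpace H]
    (U : H →L[ℂ] H) (hU : U ∈ unitary (H →L[ℂ] H)) (c : ℂ) (hc : ‖c‖ = 1)
    (μ : ℂ) (hμ : μ ≠ 1)
    (B : H × H → H × H)
    (hB : ∀ ξ η : H, B (ξ, η) =
      (ξ + (1 / 2 : ℂ) • ((U ξ - ξ) + c • (U η - η)),
       η + (1 / 2 : ℂ) • ((starRingEnd ℂ) c • (U ξ - ξ) + (U η - η)))) :
    (∀ ξ η : H, (ξ, η) ≠ (0, 0) → B (ξ, η) = (μ • ξ, μ • η) →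
      η = (starRingEnd ℂ) c • ξ ∧ ξ ≠ 0 ∧ U ξ = μ • ξ) ∧
    (∀ ξ : H, ξ ≠ 0 → U ξ = μ • ξ →
      B (ξ, (starRingEnd ℂ) c • ξ) = (μ • ξ, μ • ((starRingEnd ℂ) c • ξ))) :=
  stmt_0_general U c hc μ hμ B hB
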